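/- Let p > 2 be real and let 0 < μ₁ < μ₂. Let a₁, a₂ ≥ 0 and b₁, b₂ ≥ 0 be real numbers (representing ‖v₁'‖₂², ‖v₂'‖₂², ‖v₁‖ₚᵖ, ‖v₂‖ₚᵖ with b₁ > 0) satisfying the two inequalities a₂ − a₁ ≤ (2/p)·μ₂^{p/2−1}·(b₂ − b₁) and a₁ − a₂ ≤ (2/p)·μ₁^{p/2−1}·(b₁ − b₂). Then μ₁^{p/2−1}·b₁ − a₁ < μ₂^{p/2−1}·b₂ − a₂. -/
import Mathlib

open Real

/-- Monotonicity of Lagrange multipliers (arithmetic core of Lemma 4.1). -/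
theorem lagrange_multiplier_monotone (p mu₁ mu₂ a₁ a₂ b₁ b₂ : ℝ)
    (hp : 2 < p) (h0 : 0 < mu₁) (h12 : mu₁ < mu₂)
    (ha₁ : 0 ≤ a₁) (ha₂ : 0 ≤ a₂) (hb₁ : 0 < b₁) (hb₂ : 0 ≤ b₂)
    (h1 : a₂ - a₁ ≤ (2/p) * mu₂ ^ (p/2 - 1) * (b₂ - b₁))
    (h2 : a₁ - a₂ ≤ (2/p) * mu₁ ^ (p/2 - 1) * (b₁ - b₂)) :
    mu₁ ^ (p/2 - 1) * b₁ - a₁ < mu₂ ^ (p/2 - 1) * b₂ - a₂ := by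
  have he : (0:ℝ) < p/2 - 1 := by linarith
  have hAB : mu₁ ^ (p/2 - 1) < mu₂ ^ (p/2 - 1) :=
    Real.rpow_lt_rpow h0.le h12 he
  have hA : (0:ℝ) < mu₁ ^ (p/2 - 1) := Real.rpow_pos_of_pos h0 _
  have hq : (0:ℝ) < 2/p := by positivity
  have hq1 : 2/p < 1 := by
    rw [div_lt_one (by linarith)]; linarith
  have hbb : b₁ ≤ b₂ := by
    by_contra h
    push_neg at h
    nlinarith [mul_pos (mul_pos hq (sub_pos.mpr hAB)) (sub_pos.mpr h), add_le_add h1 h2]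
  nlinarith [mul_pos (sub_pos.mpr hAB) hb₁, mul_nonneg (sub_pos.mpr hAB).le (sub_nonneg.mpr hbb), mul_le_mul_of_nonneg_left (sub_nonneg.mpr hbb) (le_of_lt hA)]
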